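/- arXiv:1201.0099 — 5 statements merged into one kernel-verified Lean document; each statement's English description precedes it below -/
import Mathlib

section
/- Let E₁ = C/Λ₁ and E₂ = C/Λ₂ be elliptic curves and (a,b) ∈ C² \ {(0,0)}. Then the map ψ(u + Λ₁, v + Λ₂) = bu − av + (aΛ₂ + bΛ₁) is a well-defined surjective group homomorphism from E₁ × E₂ to F' = C/(aΛ₂ + bΛ₁), and its kernel is the elliptic curve F = {(at + Λ₁, bt + Λ₂) : t ∈ C} through the origin with slope vector (a,b). In particular F = {(u + Λ₁, v + Λ₂) : bu − av ∈ aΛ₂ + bΛ₁}. -/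
/-- A rank-2 discrete additive subgroup (lattice) of `ℂ`. -/
def IsLattice (Λ : AddSubgroup ℂ) : Prop :=
  Nonempty (Λ ≃ₗ[ℤ] (Fin 2 → ℤ)) ∧ DiscreteTopology Λ

/-!
The linear form `(u, v) ↦ b u - a v` sends `Λ₁ × Λ₂` into `aΛ₂ + bΛ₁`, so it descends to `ψ`, and
it is onto since `(a, b) ≠ 0`. The kernel consists of the classes of `(u, v)` with
`b (u - μ₁) = a (v + μ₂)` for some `μ₁ ∈ Λ₁`, `μ₂ ∈ Λ₂`; since a pair `(x, y)` with `b x = a y` is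
a multiple of `(a, b)`, these are exactly the points `(a t, b t)` of the slope-`(a, b)` curve.
-/

open QuotientAddGroup

theorem exists_eq_mul_of_mul_eq_mul {K : Type*} [Field K] {a b x y : K}
    (hab : (a, b) ≠ (0, 0)) (h : b * x = a * y) : ∃ t, x = a * t ∧ y = b * t := by
  rcases eq_or_ne b 0 with rfl | hb
  · have ha : a ≠ 0 := fun ha => hab (by rw [ha])
    have hy : y = 0 := by simpa [ha] using h.symm
    exact ⟨x / a, by field_simp, by simp [hy]⟩
  · exact ⟨y / b, by field_simp; linear_combination h, by field_simp⟩

theorem exists_mul_sub_mul_eq {K : Type*} [Field K] {a b : K} (hab : (a, b) ≠ (0, 0)) (z : K) :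
    ∃ u v, b * u - a * v = z := by
  rcases eq_or_ne b 0 with rfl | hb
  · have ha : a ≠ 0 := fun ha => hab (by rw [ha])
    exact ⟨0, -(z / a), by field_simp; ring⟩
  · exact ⟨z / b, 0, by field_simp; ring⟩

section Slope

variable {K : Type*} [Field K] (Λ₁ Λ₂ : AddSubgroup K) (a b : K)

def slopeSubgroup : AddSubgroup K :=
  Λ₂.map (AddMonoidHom.mulLeft a) ⊔ Λ₁.map (AddMonoidHom.mulLeft b)

variable {Λ₁ Λ₂ a b}

theorem mem_slopeSubgroup_iff {z : K} :
    z ∈ slopeSubgroup Λ₁ Λ₂ a b ↔ ∃ μ₁ ∈ Λ₁, ∃ μ₂ ∈ Λ₂, a * μ₂ + b * μ₁ = z := by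
  simp only [slopeSubgroup, AddSubgroup.mem_sup, AddSubgroup.mem_map, AddMonoidHom.coe_mulLeft]
  constructor
  · rintro ⟨_, ⟨μ₂, hμ₂, rfl⟩, _, ⟨μ₁, hμ₁, rfl⟩, rfl⟩
    exact ⟨μ₁, hμ₁, μ₂, hμ₂, rfl⟩
  · rintro ⟨μ₁, hμ₁, μ₂, hμ₂, rfl⟩
    exact ⟨_, ⟨μ₂, hμ₂, rfl⟩, _, ⟨μ₁, hμ₁, rfl⟩, rfl⟩

theorem sub_mem_slopeSubgroup_iff (hab : (a, b) ≠ (0, 0)) {u v : K} :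
    b * u - a * v ∈ slopeSubgroup Λ₁ Λ₂ a b ↔ ∃ t, u - a * t ∈ Λ₁ ∧ v - b * t ∈ Λ₂ := by
  rw [mem_slopeSubgroup_iff]
  constructor
  · rintro ⟨μ₁, hμ₁, μ₂, hμ₂, hz⟩
    obtain ⟨t, hu, hv⟩ :=
      exists_eq_mul_of_mul_eq_mul (x := u - μ₁) (y := v + μ₂) hab (by linear_combination -hz)
    refine ⟨t, ?_, ?_⟩
    · rwa [← hu, sub_sub_cancel]
    · rw [← hv, sub_add_cancel_left]
      exact neg_mem hμ₂
  · rintro ⟨t, h₁, h₂⟩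
    exact ⟨_, h₁, _, neg_mem h₂, by ring⟩

variable (Λ₁ Λ₂ a b)

def slopeMap : (K ⧸ Λ₁) × (K ⧸ Λ₂) →+ K ⧸ slopeSubgroup Λ₁ Λ₂ a b :=
  (map Λ₁ _ (AddMonoidHom.mulLeft b) (AddSubgroup.map_le_iff_le_comap.1 le_sup_right)).coprod
    (-map Λ₂ _ (AddMonoidHom.mulLeft a) (AddSubgroup.map_le_iff_le_comap.1 le_sup_left))

@[simp]
theorem slopeMap_mk (u v : K) :
    slopeMap Λ₁ Λ₂ a b ((u : K ⧸ Λ₁), (v : K ⧸ Λ₂)) =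
      ((b * u - a * v : K) : K ⧸ slopeSubgroup Λ₁ Λ₂ a b) := by
  change ((b * u : K) : K ⧸ slopeSubgroup Λ₁ Λ₂ a b) +
    -((a * v : K) : K ⧸ slopeSubgroup Λ₁ Λ₂ a b) = _
  rw [← mk_neg, ← mk_add, sub_eq_add_neg]

variable {Λ₁ Λ₂ a b}

theorem slopeMap_surjective (hab : (a, b) ≠ (0, 0)) :
    Function.Surjective (slopeMap Λ₁ Λ₂ a b) := by
  rintro ⟨z⟩
  obtain ⟨u, v, huv⟩ := exists_mul_sub_mul_eq hab z
  exact ⟨(u, v), by rw [slopeMap_mk, huv]; rfl⟩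

theorem mk_mem_ker_slopeMap_iff (u v : K) :
    ((u : K ⧸ Λ₁), (v : K ⧸ Λ₂)) ∈ (slopeMap Λ₁ Λ₂ a b).ker ↔
      b * u - a * v ∈ slopeSubgroup Λ₁ Λ₂ a b := by
  rw [AddMonoidHom.mem_ker, slopeMap_mk, QuotientAddGroup.eq_zero_iff]

end Slope

theorem slope_curve_as_kernel_general (Λ₁ Λ₂ : AddSubgroup ℂ)
    (a b : ℂ) (hab : (a, b) ≠ ((0 : ℂ), (0 : ℂ))) :
    ∃ ψ : (ℂ ⧸ Λ₁) × (ℂ ⧸ Λ₂) →+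
        ℂ ⧸ (Λ₂.map (AddMonoidHom.mulLeft a) ⊔ Λ₁.map (AddMonoidHom.mulLeft b)),
      (∀ u v : ℂ,
        ψ (QuotientAddGroup.mk u, QuotientAddGroup.mk v) = QuotientAddGroup.mk (b * u - a * v)) ∧
      Function.Surjective ψ ∧
      (∀ u v : ℂ,
        (QuotientAddGroup.mk u, QuotientAddGroup.mk v) ∈ ψ.ker
          ↔ ∃ t : ℂ, u - a * t ∈ Λ₁ ∧ v - b * t ∈ Λ₂) ∧
      (∀ u v : ℂ,
        (QuotientAddGroup.mk u, QuotientAddGroup.mk v) ∈ ψ.ker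
          ↔ b * u - a * v ∈ Λ₂.map (AddMonoidHom.mulLeft a) ⊔ Λ₁.map (AddMonoidHom.mulLeft b)) :=
  ⟨slopeMap Λ₁ Λ₂ a b, slopeMap_mk Λ₁ Λ₂ a b, slopeMap_surjective hab,
    fun u v => (mk_mem_ker_slopeMap_iff u v).trans (sub_mem_slopeSubgroup_iff hab),
    mk_mem_ker_slopeMap_iff⟩

/-- for elliptic curves `E₁ = ℂ/Λ₁`, `E₂ = ℂ/Λ₂` and `(a,b) ≠ (0,0)`, the map
`ψ(u+Λ₁, v+Λ₂) = bu - av + (aΛ₂ + bΛ₁)` is a well-defined surjective homomorphism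
`E₁ × E₂ → ℂ/(aΛ₂ + bΛ₁)` whose kernel is the slope-`(a,b)` elliptic curve
`F = {(at+Λ₁, bt+Λ₂) : t ∈ ℂ} = {(u+Λ₁, v+Λ₂) : bu - av ∈ aΛ₂ + bΛ₁}` through the origin. -/
theorem slope_curve_as_kernel (Λ₁ Λ₂ : AddSubgroup ℂ) (h1 : IsLattice Λ₁) (h2 : IsLattice Λ₂)
    (a b : ℂ) (hab : (a, b) ≠ ((0 : ℂ), (0 : ℂ))) :
    ∃ ψ : (ℂ ⧸ Λ₁) × (ℂ ⧸ Λ₂) →+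
        ℂ ⧸ (Λ₂.map (AddMonoidHom.mulLeft a) ⊔ Λ₁.map (AddMonoidHom.mulLeft b)),
      (∀ u v : ℂ,
        ψ (QuotientAddGroup.mk u, QuotientAddGroup.mk v) = QuotientAddGroup.mk (b * u - a * v)) ∧
      Function.Surjective ψ ∧
      (∀ u v : ℂ,
        (QuotientAddGroup.mk u, QuotientAddGroup.mk v) ∈ ψ.ker
          ↔ ∃ t : ℂ, u - a * t ∈ Λ₁ ∧ v - b * t ∈ Λ₂) ∧
      (∀ u v : ℂ,
        (QuotientAddGroup.mk u, QuotientAddGroup.mk v) ∈ ψ.ker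
          ↔ b * u - a * v ∈ Λ₂.map (AddMonoidHom.mulLeft a) ⊔ Λ₁.map (AddMonoidHom.mulLeft b)) :=
  slope_curve_as_kernel_general Λ₁ Λ₂ a b hab
end

section
/- Let O be the ring of integers of an imaginary quadratic field of class number one, m a positive integer, O_m = Z + mO, and let ξ, η ∈ O be relatively prime with (ξ,η) ≠ (0,0). Then the lattice ξ·O_m + η·O_m contains m·O, and ξ·O_m + η·O_m = (ξZ + ηZ) + m·ω(ξZ + ηZ), where O = Z + ωZ. -/
/-- `ω_{-d}`: the standard generator of the ring of integers of `ℚ(√-d)`. -/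
noncomputable def omegaD (d : ℕ) : ℂ :=
  if d % 4 = 3 then (1 + Real.sqrt d * Complex.I) / 2 else Real.sqrt d * Complex.I

/-- The ring of integers `O = ℤ + ω_{-d}ℤ` of `ℚ(√-d)`, as an additive subgroup of `ℂ`. -/
noncomputable def ringO (d : ℕ) : AddSubgroup ℂ :=
  AddSubgroup.closure {1, omegaD d}

/-- The order `O_m = ℤ + m·O = ℤ + m·ω_{-d}ℤ` of conductor `m`. -/
noncomputable def orderO (d m : ℕ) : AddSubgroup ℂ :=
  AddSubgroup.closure {1, (m : ℂ) * omegaD d}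

/-!
Since `ω² ∈ ℤ + ωℤ`, the lattice `O = ℤ + ωℤ` is a ring, and clearly `m·O ⊆ O_m`. Writing
`1 = ξξ₀ + ηη₀` with `ξ₀, η₀ ∈ O`, every `mz` with `z ∈ O` is `ξ·(mξ₀z) + η·(mη₀z)`, where
`mξ₀z, mη₀z ∈ m·O ⊆ O_m`. The description by generators holds because `c·O_m = cℤ + mωcℤ`.
-/

open AddSubgroup

namespace AddSubgroup

theorem closure_pair_eq_zmultiples_sup {G : Type*} [AddGroup G] (a b : G) :
    closure ({a, b} : Set G) = zmultiples a ⊔ zmultiples b := by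
  rw [← Set.singleton_union, closure_union, zmultiples_eq_closure, zmultiples_eq_closure]

theorem map_mulLeft_closure_pair {R : Type*} [NonUnitalNonAssocRing R] (c a b : R) :
    (closure ({a, b} : Set R)).map (AddMonoidHom.mulLeft c)
      = zmultiples (c * a) ⊔ zmultiples (c * b) := by
  rw [AddMonoidHom.map_closure, Set.image_pair, closure_pair_eq_zmultiples_sup]
  rfl

variable {R : Type*} [Ring R]

theorem mul_mem_closure_one_pair {ω : R} (hω : ω * ω ∈ closure ({1, ω} : Set R)) {a b : R}
    (ha : a ∈ closure ({1, ω} : Set R)) (hb : b ∈ closure ({1, ω} : Set R)) :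
    a * b ∈ closure ({1, ω} : Set R) := by
  have hωmul : closure ({1, ω} : Set R) ≤ (closure {1, ω}).comap (AddMonoidHom.mulLeft ω) := by
    rw [closure_le, Set.pair_subset_iff]
    exact ⟨by simpa using subset_closure (by simp), hω⟩
  have hmulb : closure ({1, ω} : Set R) ≤ (closure {1, ω}).comap (AddMonoidHom.mulRight b) := by
    rw [closure_le, Set.pair_subset_iff]
    exact ⟨by simpa using hb, hωmul hb⟩
  exact hmulb ha

theorem map_natCast_mulLeft_closure_one_pair_le (n : ℕ) (ω : R) :
    (closure ({1, ω} : Set R)).map (AddMonoidHom.mulLeft (n : R)) ≤ closure {1, (n : R) * ω} := by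
  rw [AddMonoidHom.map_closure, Set.image_pair, closure_le, Set.pair_subset_iff]
  refine ⟨?_, subset_closure (by simp)⟩
  simpa using nsmul_mem (subset_closure (by simp) : (1 : R) ∈ closure {1, (n : R) * ω}) n

end AddSubgroup

theorem omegaD_mul_self_mem_ringO (d : ℕ) : omegaD d * omegaD d ∈ ringO d := by
  have hsqrt : (Real.sqrt d : ℂ) ^ 2 = d := by
    rw [← Complex.ofReal_pow, Real.sq_sqrt (Nat.cast_nonneg d), Complex.ofReal_natCast]
  rw [ringO, mem_closure_pair]
  by_cases h : d % 4 = 3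
  · -- `ω = (1 + √-d)/2` satisfies `ω² = ω - (d + 1)/4`
    have hk : (4 : ℂ) * ((d + 1) / 4 : ℕ) = d + 1 := by
      exact_mod_cast Nat.mul_div_cancel' (by omega : 4 ∣ d + 1)
    refine ⟨-((d + 1) / 4 : ℕ), 1, ?_⟩
    simp only [omegaD, h, if_true, neg_smul, natCast_zsmul, nsmul_eq_mul, one_smul, mul_one]
    linear_combination (-1 / 4 : ℂ) * hk + (-1 / 4 : ℂ) * Complex.I ^ 2 * hsqrt
      - (d / 4 : ℂ) * Complex.I_sq
  · refine ⟨-d, 0, ?_⟩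
    simp only [omegaD, h, if_false, neg_smul, natCast_zsmul, nsmul_eq_mul, zero_smul, mul_one,
      add_zero]
    linear_combination -(Complex.I ^ 2 * hsqrt) - (d : ℂ) * Complex.I_sq

theorem mul_mem_ringO {d : ℕ} {a b : ℂ} (ha : a ∈ ringO d) (hb : b ∈ ringO d) :
    a * b ∈ ringO d :=
  mul_mem_closure_one_pair (omegaD_mul_self_mem_ringO d) ha hb

theorem natCast_mul_mem_orderO {d : ℕ} (m : ℕ) {z : ℂ} (hz : z ∈ ringO d) :
    (m : ℂ) * z ∈ orderO d m :=
  map_natCast_mulLeft_closure_one_pair_le m (omegaD d) ⟨z, hz, rfl⟩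

theorem map_mulLeft_orderO (d m : ℕ) (c : ℂ) :
    (orderO d m).map (AddMonoidHom.mulLeft c)
      = zmultiples c ⊔ zmultiples ((m : ℂ) * omegaD d * c) := by
  rw [orderO, map_mulLeft_closure_pair, mul_one, mul_comm c]

theorem coprime_order_lattice_general (d m : ℕ) (ξ η : ℂ)
    (hcop : ∃ ξ₀ ∈ ringO d, ∃ η₀ ∈ ringO d, ξ * ξ₀ + η * η₀ = 1) :
    (ringO d).map (AddMonoidHom.mulLeft (m : ℂ))
      ≤ (orderO d m).map (AddMonoidHom.mulLeft ξ) ⊔ (orderO d m).map (AddMonoidHom.mulLeft η) ∧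
    (orderO d m).map (AddMonoidHom.mulLeft ξ) ⊔ (orderO d m).map (AddMonoidHom.mulLeft η)
      = (AddSubgroup.zmultiples ξ ⊔ AddSubgroup.zmultiples η)
        ⊔ (AddSubgroup.zmultiples ((m : ℂ) * omegaD d * ξ)
            ⊔ AddSubgroup.zmultiples ((m : ℂ) * omegaD d * η)) := by
  refine ⟨?_, by rw [map_mulLeft_orderO, map_mulLeft_orderO, sup_sup_sup_comm]⟩
  obtain ⟨ξ₀, hξ₀, η₀, hη₀, hsum⟩ := hcop
  rintro _ ⟨z, hz, rfl⟩
  have hsplit : (m : ℂ) * z = ξ * ((m : ℂ) * (ξ₀ * z)) + η * ((m : ℂ) * (η₀ * z)) := by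
    linear_combination (-(m : ℂ) * z) * hsum
  change (m : ℂ) * z ∈ _
  rw [hsplit]
  exact add_mem (mem_sup_left ⟨_, natCast_mul_mem_orderO m (mul_mem_ringO hξ₀ hz), rfl⟩)
    (mem_sup_right ⟨_, natCast_mul_mem_orderO m (mul_mem_ringO hη₀ hz), rfl⟩)

/-- for relatively prime `ξ, η ∈ O` (class number one), the lattice
`ξ·O_m + η·O_m` contains `m·O` and equals `(ξℤ + ηℤ) + mω(ξℤ + ηℤ)`. -/
theorem coprime_order_lattice (d m : ℕ) (hd : 0 < d) (hsq : Squarefree d) (hm : 0 < m)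
    (ξ η : ℂ) (hξ : ξ ∈ ringO d) (hη : η ∈ ringO d) (hξη : (ξ, η) ≠ ((0 : ℂ), (0 : ℂ)))
    (hcop : ∃ ξ₀ ∈ ringO d, ∃ η₀ ∈ ringO d, ξ * ξ₀ + η * η₀ = 1) :
    (ringO d).map (AddMonoidHom.mulLeft (m : ℂ))
      ≤ (orderO d m).map (AddMonoidHom.mulLeft ξ) ⊔ (orderO d m).map (AddMonoidHom.mulLeft η) ∧
    (orderO d m).map (AddMonoidHom.mulLeft ξ) ⊔ (orderO d m).map (AddMonoidHom.mulLeft η)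
      = (AddSubgroup.zmultiples ξ ⊔ AddSubgroup.zmultiples η)
        ⊔ (AddSubgroup.zmultiples ((m : ℂ) * omegaD d * ξ)
            ⊔ AddSubgroup.zmultiples ((m : ℂ) * omegaD d * η)) :=
  coprime_order_lattice_general d m ξ η hcop
end

section
/- Let O = Z + ωZ with ω = e^{πi/3} be the Eisenstein integers, m a positive integer, O_m = Z + mO, α ∈ O nonzero with coordinates α = x(α) + ω·y(α). Then the index [O : O_m + αO_m] equals gcd(y(α), m), and the index [O : O_m + ωαO_m] equals gcd(x(α)+y(α), m). -/
lemma omegaD_three_mul_self : omegaD 3 * omegaD 3 = omegaD 3 - 1 := by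
  have h3 : (Real.sqrt 3 : ℂ) * Real.sqrt 3 = 3 := by
    norm_cast; exact Real.mul_self_sqrt (by norm_num)
  simp only [omegaD]
  push_cast
  linear_combination (Complex.I ^ 2 / 4) * h3 + (3 / 4 : ℂ) * Complex.I_sq

noncomputable def eisensteinCoords : ℤ × ℤ →+ ℂ where
  toFun p := (p.1 : ℂ) + omegaD 3 * (p.2 : ℂ)
  map_zero' := by simp
  map_add' p q := by simp only [Prod.fst_add, Prod.snd_add]; push_cast; ring

@[simp]
lemma eisensteinCoords_apply (a b : ℤ) : eisensteinCoords (a, b) = (a : ℂ) + omegaD 3 * b := rfl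

lemma eisensteinCoords_injective : Function.Injective eisensteinCoords := by
  rw [injective_iff_map_eq_zero]
  rintro ⟨a, b⟩ h
  have hb : b = 0 := by simpa [omegaD] using congrArg Complex.im h
  subst hb
  simpa using h

lemma ringO_three_eq_range : ringO 3 = eisensteinCoords.range := by
  apply le_antisymm
  · rw [ringO, AddSubgroup.closure_le]
    rintro _ (rfl | rfl)
    · exact ⟨(1, 0), by simp⟩
    · exact ⟨(0, 1), by simp⟩
  · rintro _ ⟨⟨a, b⟩, rfl⟩
    have h1 : (1 : ℂ) ∈ ringO 3 := AddSubgroup.subset_closure (by simp)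
    have hω : omegaD 3 ∈ ringO 3 := AddSubgroup.subset_closure (by simp)
    simpa [mul_comm] using add_mem (zsmul_mem h1 a) (zsmul_mem hω b)

lemma orderO_three_eq_map (m : ℕ) :
    orderO 3 m
      = (AddSubgroup.closure {((1 : ℤ), (0 : ℤ)), (0, (m : ℤ))}).map eisensteinCoords := by
  rw [orderO, AddMonoidHom.map_closure, Set.image_pair]
  simp [mul_comm]

lemma map_mulLeft_orderO_three (m : ℕ) (u v : ℤ) :
    (orderO 3 m).map (AddMonoidHom.mulLeft (eisensteinCoords (u, v)))
      = (AddSubgroup.closure {(u, v), (-(m * v), m * (u + v))}).map eisensteinCoords := by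
  have hmω : eisensteinCoords (u, v) * (m * omegaD 3)
      = eisensteinCoords (-(m * v), m * (u + v)) := by
    simp only [eisensteinCoords_apply]
    push_cast
    linear_combination (m * v : ℂ) * omegaD_three_mul_self
  rw [orderO, AddMonoidHom.map_closure, AddMonoidHom.map_closure, Set.image_pair, Set.image_pair,
    AddMonoidHom.coe_mulLeft, mul_one, hmω]

lemma index_map_snd_of_one_zero_mem {B : Type*} [AddGroup B] {H : AddSubgroup (ℤ × B)}
    (h : ((1 : ℤ), (0 : B)) ∈ H) : (H.map (AddMonoidHom.snd ℤ B)).index = H.index :=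
  H.index_map_eq Prod.snd_surjective <| by
    rintro ⟨a, b⟩ (rfl : b = 0)
    simpa using zsmul_mem h a

lemma Int.closure_triple_eq_zmultiples_gcd (m v w : ℤ) :
    AddSubgroup.closure ({m, v, m * w} : Set ℤ) = AddSubgroup.zmultiples (v.gcd m : ℤ) := by
  rw [← Int.closure_eq_zmultiples]
  apply le_antisymm
  · rw [AddSubgroup.closure_le]
    have hm : m ∈ AddSubgroup.closure ({v, m} : Set ℤ) := AddSubgroup.subset_closure (by simp)
    rintro _ (rfl | rfl | rfl)
    · exact hm
    · exact AddSubgroup.subset_closure (by simp)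
    · simpa [mul_comm] using zsmul_mem hm w
  · exact AddSubgroup.closure_mono (by intro; simp; tauto)

lemma index_closure_eisenstein_generators (m : ℕ) (u v : ℤ) :
    (AddSubgroup.closure
        {((1 : ℤ), (0 : ℤ)), (0, (m : ℤ)), (u, v), (-(m * v), m * (u + v))}).index = v.gcd m := by
  rw [← index_map_snd_of_one_zero_mem (AddSubgroup.subset_closure (Set.mem_insert _ _)),
    AddMonoidHom.map_closure]
  simp only [Set.image_insert_eq, Set.image_singleton, AddMonoidHom.coe_snd]
  rw [AddSubgroup.closure_insert_zero, Int.closure_triple_eq_zmultiples_gcd,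
    Int.index_zmultiples, Int.natAbs_natCast]

theorem relIndex_orderO_three_sup_map_mulLeft (m : ℕ) (u v : ℤ) :
    ((orderO 3 m) ⊔ (orderO 3 m).map (AddMonoidHom.mulLeft (eisensteinCoords (u, v)))).relIndex
      (ringO 3) = v.gcd m := by
  rw [map_mulLeft_orderO_three, orderO_three_eq_map, ← AddSubgroup.map_sup,
    ← AddSubgroup.closure_union, Set.insert_union, Set.singleton_union, ringO_three_eq_range,
    AddMonoidHom.range_eq_map, AddSubgroup.relIndex_map_map_of_injective _ _ eisensteinCoords_injective,
    AddSubgroup.relIndex_top_right, index_closure_eisenstein_generators]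

theorem components_of_pullback_of_diagonals_general (m : ℕ) (x y : ℤ) (α : ℂ)
    (hαdef : α = (x : ℂ) + omegaD 3 * (y : ℂ)) :
    ((orderO 3 m) ⊔ (orderO 3 m).map (AddMonoidHom.mulLeft α)).relIndex (ringO 3)
      = Int.gcd y m ∧
    ((orderO 3 m) ⊔ (orderO 3 m).map (AddMonoidHom.mulLeft (omegaD 3 * α))).relIndex (ringO 3)
      = Int.gcd (x + y) m := by
  have hωα : omegaD 3 * α = eisensteinCoords (-y, x + y) := by
    rw [hαdef, eisensteinCoords_apply]
    push_cast
    linear_combination (y : ℂ) * omegaD_three_mul_self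
  rw [hωα, hαdef, ← eisensteinCoords_apply]
  exact ⟨relIndex_orderO_three_sup_map_mulLeft m x y,
    relIndex_orderO_three_sup_map_mulLeft m (-y) (x + y)⟩

/-- for the Eisenstein integers `O = ℤ + ωℤ`, `ω = e^{πi/3}`, and nonzero
`α = x + ωy ∈ O`: `[O : O_m + αO_m] = gcd(y, m)` and `[O : O_m + ωαO_m] = gcd(x+y, m)`. -/
theorem components_of_pullback_of_diagonals (m : ℕ) (hm : 0 < m) (x y : ℤ) (α : ℂ)
    (hαdef : α = (x : ℂ) + omegaD 3 * (y : ℂ)) (hα0 : α ≠ 0) :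
    ((orderO 3 m) ⊔ (orderO 3 m).map (AddMonoidHom.mulLeft α)).relIndex (ringO 3)
      = Int.gcd y m ∧
    ((orderO 3 m) ⊔ (orderO 3 m).map (AddMonoidHom.mulLeft (omegaD 3 * α))).relIndex (ringO 3)
      = Int.gcd (x + y) m :=
  components_of_pullback_of_diagonals_general m x y α hαdef
end

section
/- Let O be the Eisenstein integers, m a positive integer, O_m = Z + mO, α ∈ O nonzero with coordinates x(α), y(α) ∈ Z. Then the total number of irreducible components of the pullback of Hirzebruch's elliptic configuration D = E(1,0) + E(0,1) + E(1,1) + E(1, e^{πi/3}) under the isogeny diag(α,1) : (C/O_m)² → (C/O)² equals m + m|α|² + gcd(y(α),m) + gcd(x(α)+y(α),m). -/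
/-!
Identify `O = ℤ + ℤω` with `ℤ²` through `v ↦ v 0 + v 1 * ω`. Then `O_m` is the lattice
`{v | m ∣ v 1}`, of index `m`, and multiplication by `α = x + yω` is an integer matrix of
determinant `x² + xy + y² = |α|²`, whence `[O : αO_m] = m|α|²`. For every integer matrix `A`,
the lattice `{v | m ∣ v 1}` together with its image under `A` is `{v | gcd (A 1 0) m ∣ v 1}`;
for `α` and `ωα = -y + (x + y)ω` the entry `A 1 0` is `y` and `x + y`.
-/

open Matrix

section IndexOfMatrixImage

variable {ι : Type*} [Fintype ι] [DecidableEq ι]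

theorem index_range_toLin'_eq_natAbs_det {A : Matrix ι ι ℤ} (hA : A.det ≠ 0) :
    (toLin' A).toAddMonoidHom.range.index = A.det.natAbs := by
  rw [← LinearMap.det_toLin' A]
  exact (Submodule.natAbs_det_equiv (LinearMap.range (toLin' A))
    (LinearEquiv.ofInjective _ (mulVec_injective_of_det_ne_zero hA))).symm

theorem index_map_toLin' (L : AddSubgroup (ι → ℤ)) {A : Matrix ι ι ℤ} (hA : A.det ≠ 0) :
    (L.map (toLin' A).toAddMonoidHom).index = L.index * A.det.natAbs := by
  rw [L.index_map_of_injective (mulVec_injective_of_det_ne_zero hA),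
    index_range_toLin'_eq_natAbs_det hA]

end IndexOfMatrixImage

def conductorLattice (n : ℤ) : AddSubgroup (Fin 2 → ℤ) :=
  (AddSubgroup.zmultiples n).comap (Pi.evalAddMonoidHom (fun _ : Fin 2 => ℤ) 1)

theorem mem_conductorLattice {n : ℤ} {v : Fin 2 → ℤ} :
    v ∈ conductorLattice n ↔ n ∣ v 1 :=
  Int.mem_zmultiples_iff

theorem index_conductorLattice (n : ℤ) : (conductorLattice n).index = n.natAbs := by
  rw [conductorLattice, AddSubgroup.index_comap_of_surjective _ (Function.surjective_eval 1),
    Int.index_zmultiples]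

theorem toLin'_apply_one (A : Matrix (Fin 2) (Fin 2) ℤ) (v : Fin 2 → ℤ) :
    toLin' A v 1 = A 1 0 * v 0 + A 1 1 * v 1 := by
  simp [mulVec, dotProduct, Fin.sum_univ_two]

theorem conductorLattice_sup_map_toLin' (A : Matrix (Fin 2) (Fin 2) ℤ) (m : ℤ) :
    conductorLattice m ⊔ (conductorLattice m).map (toLin' A).toAddMonoidHom
      = conductorLattice (Int.gcd (A 1 0) m) := by
  have hg₀ : (Int.gcd (A 1 0) m : ℤ) ∣ A 1 0 := Int.gcd_dvd_left _ _
  have hgm : (Int.gcd (A 1 0) m : ℤ) ∣ m := Int.gcd_dvd_right _ _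
  apply le_antisymm
  · refine sup_le (fun v hv => ?_) ?_
    · exact mem_conductorLattice.2 (hgm.trans (mem_conductorLattice.1 hv))
    · rintro _ ⟨v, hv, rfl⟩
      rw [mem_conductorLattice, LinearMap.toAddMonoidHom_coe, toLin'_apply_one]
      exact dvd_add (hg₀.mul_right _) ((hgm.trans (mem_conductorLattice.1 hv)).mul_left _)
  · intro v hv
    obtain ⟨k, hk⟩ := mem_conductorLattice.1 hv
    -- By Bézout, `v 1 = A 1 0 * c + m * (gcdB * k)`, and `A 1 0 * c` is the second coordinate
    -- of `A ![c, 0]`.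
    set c := Int.gcdA (A 1 0) m * k
    have hu : ![c, 0] ∈ conductorLattice m := mem_conductorLattice.2 (dvd_zero m)
    have hw : v - toLin' A ![c, 0] ∈ conductorLattice m := by
      refine mem_conductorLattice.2 ⟨Int.gcdB (A 1 0) m * k, ?_⟩
      rw [Pi.sub_apply, toLin'_apply_one, hk, Int.gcd_eq_gcd_ab]
      simp only [cons_val_zero, cons_val_one, c]
      ring
    rw [← sub_add_cancel v (toLin' A ![c, 0])]
    exact add_mem (AddSubgroup.mem_sup_left hw) (AddSubgroup.mem_sup_right ⟨_, hu, rfl⟩)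

def latticeCoords (ω : ℂ) : (Fin 2 → ℤ) →+ ℂ :=
  AddMonoidHom.mk' (fun v => v 0 + v 1 * ω) fun _ _ => by push_cast [Pi.add_apply]; ring

@[simp]
theorem latticeCoords_apply (ω : ℂ) (v : Fin 2 → ℤ) :
    latticeCoords ω v = v 0 + v 1 * ω := rfl

theorem latticeCoords_injective {ω : ℂ} (hω : ω.im ≠ 0) :
    Function.Injective (latticeCoords ω) := by
  refine (injective_iff_map_eq_zero _).2 fun v hv => ?_
  have him : (v 1 : ℝ) * ω.im = 0 := by simpa using congrArg Complex.im hv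
  have h1 : v 1 = 0 := by exact_mod_cast (mul_eq_zero.1 him).resolve_right hω
  have h0 : v 0 = 0 := by simpa [h1] using hv
  ext i; fin_cases i <;> assumption

theorem closure_one_intCast_mul_eq_map_latticeCoords (ω : ℂ) (n : ℤ) :
    AddSubgroup.closure {1, (n : ℂ) * ω} = (conductorLattice n).map (latticeCoords ω) := by
  ext z
  simp only [AddSubgroup.mem_closure_pair, AddSubgroup.mem_map, mem_conductorLattice,
    latticeCoords_apply, zsmul_eq_mul, mul_one]
  constructor
  · rintro ⟨a, b, rfl⟩
    exact ⟨![a, n * b], by simp, by simp only [cons_val_zero, cons_val_one, Int.cast_mul]; ring⟩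
  · rintro ⟨v, ⟨k, hk⟩, rfl⟩
    exact ⟨v 0, k, by rw [hk]; push_cast; ring⟩

theorem conductorLattice_one : conductorLattice 1 = ⊤ :=
  eq_top_iff.2 fun _ _ => mem_conductorLattice.2 (one_dvd _)

theorem closure_one_eq_map_latticeCoords_top (ω : ℂ) :
    AddSubgroup.closure {1, ω} = (⊤ : AddSubgroup (Fin 2 → ℤ)).map (latticeCoords ω) := by
  simpa [conductorLattice_one] using closure_one_intCast_mul_eq_map_latticeCoords ω 1

theorem omegaD_three : omegaD 3 = (1 + Real.sqrt 3 * Complex.I) / 2 := by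
  norm_num [omegaD]

theorem omegaD_three_sq : omegaD 3 ^ 2 = omegaD 3 - 1 := by
  have h3 : (Real.sqrt 3 : ℂ) ^ 2 = 3 := by
    exact_mod_cast Real.sq_sqrt (by norm_num : (0 : ℝ) ≤ 3)
  rw [omegaD_three]
  linear_combination (Complex.I ^ 2 / 4) * h3 + (3 / 4) * Complex.I_sq

theorem omegaD_three_im_ne_zero : (omegaD 3).im ≠ 0 := by
  rw [omegaD_three]
  simp

theorem normSq_intCast_add_omegaD_three_mul (x y : ℤ) :
    Complex.normSq (x + omegaD 3 * y) = x ^ 2 + x * y + y ^ 2 := by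
  have h3 : Real.sqrt 3 ^ 2 = 3 := Real.sq_sqrt (by norm_num)
  have hcoords : (x : ℂ) + omegaD 3 * y
      = ((x + y / 2 : ℝ) : ℂ) + ((Real.sqrt 3 / 2 * y : ℝ) : ℂ) * Complex.I := by
    rw [omegaD_three]
    push_cast
    ring
  rw [hcoords, Complex.normSq_add_mul_I]
  linear_combination (y : ℝ) ^ 2 / 4 * h3

/-- Multiplication by `a + bω` in the coordinates `v 0 + v 1 * ω`, using `ω ^ 2 = ω - 1`. -/
def eisensteinMulMatrix (a b : ℤ) : Matrix (Fin 2) (Fin 2) ℤ :=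
  !![a, -b; b, a + b]

theorem det_eisensteinMulMatrix (a b : ℤ) :
    (eisensteinMulMatrix a b).det = a ^ 2 + a * b + b ^ 2 := by
  rw [eisensteinMulMatrix, det_fin_two_of]
  ring

theorem latticeCoords_comp_eisensteinMulMatrix (a b : ℤ) :
    (latticeCoords (omegaD 3)).comp (toLin' (eisensteinMulMatrix a b)).toAddMonoidHom
      = (AddMonoidHom.mulLeft ((a : ℂ) + omegaD 3 * b)).comp (latticeCoords (omegaD 3)) := by
  refine AddMonoidHom.ext fun v => ?_
  simp only [eisensteinMulMatrix, AddMonoidHom.comp_apply, LinearMap.toAddMonoidHom_coe,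
    toLin'_apply, cons_mulVec, dotProduct, Fin.sum_univ_two, cons_val_zero, cons_val_one,
    empty_mulVec, latticeCoords_apply, AddMonoidHom.coe_mulLeft]
  push_cast
  linear_combination (-(b : ℂ) * v 1) * omegaD_three_sq

theorem map_mulLeft_map_latticeCoords (a b : ℤ) (L : AddSubgroup (Fin 2 → ℤ)) :
    (L.map (latticeCoords (omegaD 3))).map (AddMonoidHom.mulLeft ((a : ℂ) + omegaD 3 * b))
      = (L.map (toLin' (eisensteinMulMatrix a b)).toAddMonoidHom).map
          (latticeCoords (omegaD 3)) := by
  rw [AddSubgroup.map_map, AddSubgroup.map_map, latticeCoords_comp_eisensteinMulMatrix]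

theorem orderO_three_eq_map_s14 (m : ℕ) :
    orderO 3 m = (conductorLattice m).map (latticeCoords (omegaD 3)) := by
  rw [orderO, ← closure_one_intCast_mul_eq_map_latticeCoords, Int.cast_natCast]

theorem relIndex_map_latticeCoords_ringO (L : AddSubgroup (Fin 2 → ℤ)) :
    (L.map (latticeCoords (omegaD 3))).relIndex (ringO 3) = L.index := by
  rw [ringO, closure_one_eq_map_latticeCoords_top, AddSubgroup.relIndex_map_map_of_injective _ _
    (latticeCoords_injective omegaD_three_im_ne_zero), AddSubgroup.relIndex_top_right]

theorem components_of_pullback_of_Hirzebruch_configuration_general (m : ℕ)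
    (x y : ℤ) (α : ℂ) (hαdef : α = (x : ℂ) + omegaD 3 * (y : ℂ)) (hα0 : α ≠ 0) :
    ((orderO 3 m).relIndex (ringO 3) : ℝ)
      + (((orderO 3 m).map (AddMonoidHom.mulLeft α)).relIndex (ringO 3) : ℝ)
      + (((orderO 3 m) ⊔ (orderO 3 m).map (AddMonoidHom.mulLeft α)).relIndex (ringO 3) : ℝ)
      + (((orderO 3 m) ⊔ (orderO 3 m).map
            (AddMonoidHom.mulLeft (omegaD 3 * α))).relIndex (ringO 3) : ℝ)
      = m + m * Complex.normSq α + Int.gcd y m + Int.gcd (x + y) m := by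
  subst hαdef
  have hωα : omegaD 3 * (x + omegaD 3 * y)
      = ((-y : ℤ) : ℂ) + omegaD 3 * ((x + y : ℤ) : ℂ) := by
    push_cast
    linear_combination (y : ℂ) * omegaD_three_sq
  have hnorm : ((eisensteinMulMatrix x y).det : ℝ) = Complex.normSq (x + omegaD 3 * y) := by
    rw [det_eisensteinMulMatrix, normSq_intCast_add_omegaD_three_mul]
    push_cast
    ring
  have hdet : (eisensteinMulMatrix x y).det ≠ 0 := by
    exact_mod_cast hnorm ▸ (Complex.normSq_pos.2 hα0).ne'
  rw [hωα, orderO_three_eq_map_s14, map_mulLeft_map_latticeCoords, map_mulLeft_map_latticeCoords,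
    ← AddSubgroup.map_sup, ← AddSubgroup.map_sup, relIndex_map_latticeCoords_ringO,
    relIndex_map_latticeCoords_ringO, relIndex_map_latticeCoords_ringO,
    relIndex_map_latticeCoords_ringO, conductorLattice_sup_map_toLin',
    conductorLattice_sup_map_toLin', index_map_toLin' _ hdet, index_conductorLattice,
    index_conductorLattice, index_conductorLattice]
  rw [Nat.cast_mul, Nat.cast_natAbs (eisensteinMulMatrix x y).det, Int.cast_abs, hnorm,
    abs_of_nonneg (Complex.normSq_nonneg _)]
  simp [eisensteinMulMatrix]

/-- the total number of irreducible components of the pullback of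
Hirzebruch's configuration `D = E(1,0) + E(0,1) + E(1,1) + E(1, e^{πi/3})` under
`diag(α,1) : (ℂ/O_m)² → (ℂ/O)²` is `m + m|α|² + gcd(y(α),m) + gcd(x(α)+y(α),m)`,
where the component count of the pullback of `E(a,b)` is `[O : a·O_m + b·α·O_m]`. -/
theorem components_of_pullback_of_Hirzebruch_configuration (m : ℕ) (hm : 0 < m)
    (x y : ℤ) (α : ℂ) (hαdef : α = (x : ℂ) + omegaD 3 * (y : ℂ)) (hα0 : α ≠ 0) :
    ((orderO 3 m).relIndex (ringO 3) : ℝ)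
      + (((orderO 3 m).map (AddMonoidHom.mulLeft α)).relIndex (ringO 3) : ℝ)
      + (((orderO 3 m) ⊔ (orderO 3 m).map (AddMonoidHom.mulLeft α)).relIndex (ringO 3) : ℝ)
      + (((orderO 3 m) ⊔ (orderO 3 m).map
            (AddMonoidHom.mulLeft (omegaD 3 * α))).relIndex (ringO 3) : ℝ)
      = m + m * Complex.normSq α + Int.gcd y m + Int.gcd (x + y) m :=
  components_of_pullback_of_Hirzebruch_configuration_general m x y α hαdef hα0
end

section
/- Let O be the ring of integers of an imaginary quadratic field Q(√-d), and for positive integers m ≠ n let E_m = C/(Z+mO) and E_n = C/(Z+nO). Then the abelian surfaces E_m × E_m and E_n × E_n are not isomorphic as complex tori. -/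
/-!
A `ℂ`-linear isomorphism `ℂ² → ℂ²` commutes with scalars, so it preserves the ring of
multipliers `{z | z • L ⊆ L}` of a lattice. The multiplier ring of `O_m × O_m` is the order
`O_m`, hence `O_m = O_n`; comparing imaginary parts of `m·ω ∈ O_n` and `n·ω ∈ O_m` gives
`n ∣ m` and `m ∣ n`.
-/

lemma mem_orderO_iff {d m : ℕ} {z : ℂ} :
    z ∈ orderO d m ↔ ∃ a b : ℤ, z = a + b * (m * omegaD d) := by
  simp only [orderO, AddSubgroup.mem_closure_pair, zsmul_eq_mul, mul_one, eq_comm]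

lemma AddSubgroup.mul_mem_closure_one_pair_s18 {R : Type*} [CommRing R] {x : R}
    (hx : x ^ 2 ∈ closure {1, x}) {z w : R} (hz : z ∈ closure {1, x})
    (hw : w ∈ closure {1, x}) : z * w ∈ closure {1, x} := by
  obtain ⟨a, b, rfl⟩ := mem_closure_pair.mp hz
  obtain ⟨c, e, rfl⟩ := mem_closure_pair.mp hw
  have hexpand : (a • (1 : R) + b • x) * (c • 1 + e • x)
      = ((a * c) • 1 + (a * e + b * c) • x) + (b * e) • x ^ 2 := by
    simp only [zsmul_eq_mul]; push_cast; ring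
  rw [hexpand]
  exact add_mem (mem_closure_pair.mpr ⟨_, _, rfl⟩) (zsmul_mem hx _)

lemma omegaD_sq (d : ℕ) : ∃ p q : ℤ, omegaD d ^ 2 = p + q * omegaD d := by
  have hsqrt : (Real.sqrt d : ℂ) ^ 2 = d := by
    exact_mod_cast Real.sq_sqrt (Nat.cast_nonneg d)
  unfold omegaD
  split_ifs with h
  · obtain ⟨k, hk⟩ : 4 ∣ d + 1 := by omega
    have hdk : (d : ℂ) = 4 * k - 1 := by
      linear_combination (by exact_mod_cast hk : (d : ℂ) + 1 = 4 * k)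
    refine ⟨-k, 1, ?_⟩
    push_cast
    linear_combination (Real.sqrt d : ℂ) ^ 2 / 4 * Complex.I_sq - hsqrt / 4 - hdk / 4
  · refine ⟨-d, 0, ?_⟩
    push_cast
    linear_combination (Real.sqrt d : ℂ) ^ 2 * Complex.I_sq - hsqrt

lemma mul_mem_orderO {d m : ℕ} {z w : ℂ} (hz : z ∈ orderO d m) (hw : w ∈ orderO d m) :
    z * w ∈ orderO d m := by
  refine AddSubgroup.mul_mem_closure_one_pair_s18 ?_ hz hw
  obtain ⟨p, q, hpq⟩ := omegaD_sq d
  exact mem_orderO_iff.mpr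
    ⟨m ^ 2 * p, q * m, by push_cast; linear_combination (m : ℂ) ^ 2 * hpq⟩

lemma one_mem_orderO (d m : ℕ) : (1 : ℂ) ∈ orderO d m :=
  AddSubgroup.subset_closure (Set.mem_insert 1 _)

lemma mem_of_forall_mul_mem_of_image_prod_eq {K : Type*} [CommSemiring K] {L L' : Set K}
    (T : (K × K) ≃ₗ[K] K × K) (hT : T '' L ×ˢ L = L' ×ˢ L') (h1 : 1 ∈ L') {z : K}
    (hz : ∀ x ∈ L, z * x ∈ L) : z ∈ L' := by
  obtain ⟨u, ⟨hu₁, hu₂⟩, hTu⟩ : ((1 : K), (1 : K)) ∈ T '' L ×ˢ L := hT ▸ ⟨h1, h1⟩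
  have hTzu : T (z • u) ∈ L' ×ˢ L' := hT ▸ Set.mem_image_of_mem T ⟨hz _ hu₁, hz _ hu₂⟩
  rw [map_smul, hTu] at hTzu
  simpa using hTzu.1

lemma orderO_le_of_image_prod_eq {d m n : ℕ} (T : (ℂ × ℂ) ≃ₗ[ℂ] ℂ × ℂ)
    (hT : T '' (orderO d m : Set ℂ) ×ˢ orderO d m = (orderO d n : Set ℂ) ×ˢ orderO d n) :
    orderO d m ≤ orderO d n := fun _ hz ↦
  mem_of_forall_mul_mem_of_image_prod_eq T hT (one_mem_orderO d n) fun _ ↦ mul_mem_orderO hz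

lemma omegaD_im_pos {d : ℕ} (hd : 0 < d) : 0 < (omegaD d).im := by
  have h : 0 < Real.sqrt d := Real.sqrt_pos.mpr (by exact_mod_cast hd)
  unfold omegaD
  split_ifs <;> simp <;> linarith

lemma dvd_of_orderO_le {d m n : ℕ} (hd : 0 < d) (h : orderO d m ≤ orderO d n) : n ∣ m := by
  obtain ⟨a, b, hab⟩ := mem_orderO_iff.mp <|
    h (mem_orderO_iff (z := m * omegaD d) |>.mpr ⟨0, 1, by simp⟩)
  have him : (m : ℝ) * (omegaD d).im = b * (n * (omegaD d).im) := by
    simpa using congrArg Complex.im hab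
  have hmbn : (m : ℝ) = n * b :=
    mul_right_cancel₀ (omegaD_im_pos hd).ne' (by linear_combination him)
  exact Int.natCast_dvd_natCast.mp ⟨b, by exact_mod_cast hmbn⟩

theorem squares_of_distinct_conductors_not_isomorphic_general (d m n : ℕ) (hd : 0 < d)
    (hmn : m ≠ n) :
    ¬ ∃ T : (ℂ × ℂ) ≃ₗ[ℂ] ℂ × ℂ,
        T '' (((orderO d m).prod (orderO d m) : AddSubgroup (ℂ × ℂ)) : Set (ℂ × ℂ))
          = (((orderO d n).prod (orderO d n) : AddSubgroup (ℂ × ℂ)) : Set (ℂ × ℂ)) := by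
  rintro ⟨T, hT⟩
  simp only [AddSubgroup.coe_prod] at hT
  have hT_symm :
      T.symm '' (orderO d n : Set ℂ) ×ˢ orderO d n = (orderO d m : Set ℂ) ×ˢ orderO d m := by
    rw [← hT]; exact T.toEquiv.symm_image_image _
  exact hmn <| Nat.dvd_antisymm
    (dvd_of_orderO_le hd (orderO_le_of_image_prod_eq T.symm hT_symm))
    (dvd_of_orderO_le hd (orderO_le_of_image_prod_eq T hT))

/-- for distinct conductors `m ≠ n`, the abelian surfaces
`E_m × E_m = ℂ²/(O_m × O_m)` and `E_n × E_n = ℂ²/(O_n × O_n)` are not isomorphic as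
complex tori: no invertible `ℂ`-linear map of `ℂ²` carries the lattice `O_m × O_m`
onto `O_n × O_n`. -/
theorem squares_of_distinct_conductors_not_isomorphic (d m n : ℕ) (hd : 0 < d)
    (hsq : Squarefree d) (hm : 0 < m) (hn : 0 < n) (hmn : m ≠ n) :
    ¬ ∃ T : (ℂ × ℂ) ≃ₗ[ℂ] ℂ × ℂ,
        T '' (((orderO d m).prod (orderO d m) : AddSubgroup (ℂ × ℂ)) : Set (ℂ × ℂ))
          = (((orderO d n).prod (orderO d n) : AddSubgroup (ℂ × ℂ)) : Set (ℂ × ℂ)) :=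
  squares_of_distinct_conductors_not_isomorphic_general d m n hd hmn
end
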